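/- Let v_1, v_2, … be i.i.d. random variables taking values in [0, β] with mean EV, and let V̂_k = (1/k)∑_{i=1}^k v_i. Define N to be the first k such that V̂_k > EV − Δ, for Δ > 0. Then E[N] ≤ 1 + β²/Δ². -/

import Mathlib

open MeasureTheory ProbabilityTheory
open scoped ENNReal

/-!
Since `N` is `ℕ`-valued, `E[N] = ∑_{k ≥ 0} P(N > k)`. For `k ≥ 1` the event `N > k` forces
`V̂_k ≤ EV - Δ`, which by Hoeffding's inequality has probability at most `r ^ k` with
`r = exp (-2Δ²/β²)`; for `k = 0` this bound is trivial. Summing the geometric series,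
`E[N] ≤ 1 / (1 - r) ≤ 1 + β²/(2Δ²)`, using `e^c ≥ 1 + c`.
-/

theorem measurable_sInf_setOf_nat {α : Type*} [MeasurableSpace α] {p : ℕ → α → Prop}
    (hp : ∀ k, MeasurableSet {a | p k a}) : Measurable fun a => sInf {k | p k a} := by
  refine measurable_of_Ioi fun n => ?_
  -- `n < sInf S` iff `S` is nonempty and misses `0, …, n`; nonemptiness matters as `sInf ∅ = 0`.
  have h : (fun a => sInf {k | p k a}) ⁻¹' Set.Ioi n
      = (⋃ k, {a | p k a}) ∩ ⋂ k ∈ Set.Iic n, {a | p k a}ᶜ := by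
    ext a
    simp only [Set.mem_preimage, Set.mem_Ioi, Set.mem_inter_iff, Set.mem_iUnion,
      Set.mem_iInter, Set.mem_Iic, Set.mem_compl_iff, Set.mem_ofPred_eq]
    refine ⟨fun hn => ⟨Nat.nonempty_of_pos_sInf (n.zero_le.trans_lt hn),
      fun k hk => Nat.notMem_of_lt_sInf (hk.trans_lt hn)⟩, fun ⟨hne, hle⟩ => ?_⟩
    by_contra! hsInf
    exact hle _ hsInf (Nat.sInf_mem hne)
  rw [h]
  exact (MeasurableSet.iUnion hp).inter
    (MeasurableSet.biInter (Set.to_countable _) fun k _ => (hp k).compl)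

theorem lintegral_natCast_eq_tsum_measure_lt {α : Type*} [MeasurableSpace α] (μ : Measure α)
    {N : α → ℕ} (hN : Measurable N) : ∫⁻ a, (N a : ℝ≥0∞) ∂μ = ∑' k : ℕ, μ {a | k < N a} := by
  have hset : ∀ k : ℕ, MeasurableSet {a | k < N a} := fun _ =>
    measurableSet_lt measurable_const hN
  have hpt : ∀ a, (N a : ℝ≥0∞) = ∑' k : ℕ, {a | k < N a}.indicator 1 a := by
    intro a
    rw [tsum_eq_sum (s := Finset.range (N a)) fun k hk => by simpa using hk]
    simp only [Set.indicator_apply, Set.mem_ofPred_eq, Pi.one_apply]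
    rw [Finset.sum_ite_of_true fun k hk => Finset.mem_range.1 hk]
    simp
  simp_rw [hpt]
  rw [lintegral_tsum fun k => (measurable_one.indicator (hset k)).aemeasurable]
  exact tsum_congr fun k => lintegral_indicator_one (hset k)

theorem integral_natCast_le_of_measureReal_lt_le_pow {α : Type*} [MeasurableSpace α]
    {μ : Measure α} [IsFiniteMeasure μ] {N : α → ℕ} (hN : Measurable N) {r : ℝ} (hr0 : 0 ≤ r)
    (hr1 : r < 1) (htail : ∀ k : ℕ, μ.real {a | k < N a} ≤ r ^ k) :
    ∫ a, (N a : ℝ) ∂μ ≤ (1 - r)⁻¹ := by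
  have hlin : ∫⁻ a, (N a : ℝ≥0∞) ∂μ ≤ ENNReal.ofReal (1 - r)⁻¹ :=
    calc ∫⁻ a, (N a : ℝ≥0∞) ∂μ = ∑' k : ℕ, μ {a | k < N a} :=
          lintegral_natCast_eq_tsum_measure_lt μ hN
    _ ≤ ∑' k : ℕ, ENNReal.ofReal (r ^ k) := ENNReal.tsum_le_tsum fun k => by
          rw [← ofReal_measureReal]; exact ENNReal.ofReal_le_ofReal (htail k)
    _ = ENNReal.ofReal (1 - r)⁻¹ := by
          rw [← ENNReal.ofReal_tsum_of_nonneg (fun k => by positivity)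
            (summable_geometric_of_lt_one hr0 hr1), tsum_geometric_of_lt_one hr0 hr1]
  rw [integral_eq_lintegral_of_nonneg_ae (ae_of_all _ fun a => Nat.cast_nonneg _)
    (measurable_from_top.comp hN).aestronglyMeasurable]
  simp_rw [ENNReal.ofReal_natCast]
  exact ENNReal.toReal_le_of_le_ofReal (inv_nonneg.2 (by linarith)) hlin

theorem inv_one_sub_exp_neg_le_one_add_inv {c : ℝ} (hc : 0 < c) :
    (1 - Real.exp (-c))⁻¹ ≤ 1 + c⁻¹ := by
  have hc' : c ≤ Real.exp c - 1 := by linarith [Real.add_one_le_exp c]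
  have hpos : 0 < Real.exp c - 1 := hc.trans_le hc'
  calc (1 - Real.exp (-c))⁻¹ = 1 + (Real.exp c - 1)⁻¹ := by
        rw [Real.exp_neg]; field_simp; ring
    _ ≤ 1 + c⁻¹ := by gcongr

theorem measureReal_sum_range_le_sub_le_of_iIndepFun {Ω : Type*} [MeasurableSpace Ω]
    {μ : Measure Ω} [IsProbabilityMeasure μ] {X : ℕ → Ω → ℝ} (hindep : iIndepFun X μ)
    (hmeas : ∀ i, AEMeasurable (X i) μ) {a b : ℝ} (hbdd : ∀ i, ∀ᵐ ω ∂μ, X i ω ∈ Set.Icc a b)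
    (n : ℕ) {t : ℝ} (ht : 0 ≤ t) :
    μ.real {ω | ∑ i ∈ Finset.range n, X i ω ≤ ∑ i ∈ Finset.range n, μ[X i] - n * t}
      ≤ Real.exp (-2 * n * t ^ 2 / (b - a) ^ 2) := by
  have hsubG : ∀ i, HasSubgaussianMGF (fun ω => μ[X i] - X i ω) ((‖b - a‖₊ / 2) ^ 2) μ := by
    intro i
    convert (hasSubgaussianMGF_of_mem_Icc (hmeas i) (hbdd i)).neg using 1
    ext ω
    simp
  have hindep' :=
    hindep.comp (fun i (y : ℝ) => μ[X i] - y) fun _ => measurable_const.sub measurable_id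
  have hoeff := HasSubgaussianMGF.measure_sum_range_ge_le_of_iIndepFun hindep' (n := n)
    (fun i _ => hsubG i) (mul_nonneg n.cast_nonneg ht)
  have hevent : {ω | ∑ i ∈ Finset.range n, X i ω ≤ ∑ i ∈ Finset.range n, μ[X i] - n * t}
      = {ω | n * t ≤ ∑ i ∈ Finset.range n, (μ[X i] - X i ω)} := by
    ext ω
    simp only [Set.mem_ofPred_eq, Finset.sum_sub_distrib]
    constructor <;> intro h <;> linarith
  rw [hevent]
  refine hoeff.trans_eq (congrArg Real.exp ?_)
  rcases n.eq_zero_or_pos with rfl | hn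
  · simp
  · push_cast [coe_nnnorm, Real.norm_eq_abs, div_pow, sq_abs]
    field_simp

theorem sum_range_le_of_lt_sInf {x : ℕ → ℝ} {θ : ℝ} {k : ℕ}
    (hk : k < sInf {j : ℕ | 1 ≤ j ∧ (∑ i ∈ Finset.range j, x i) / j > θ}) :
    ∑ i ∈ Finset.range k, x i ≤ k * θ := by
  rcases k.eq_zero_or_pos with rfl | hpos
  · simp
  have hkpos : (0 : ℝ) < k := by exact_mod_cast hpos
  have hnot := Nat.notMem_of_lt_sInf hk
  simp only [Set.mem_ofPred_eq, not_and, gt_iff_lt, not_lt] at hnot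
  rw [← div_le_iff₀' hkpos]
  exact hnot hpos

theorem expected_stopping_time_bound
    {Ω : Type*} [MeasureSpace Ω] [IsProbabilityMeasure (ℙ : Measure Ω)]
    (β Δ : ℝ) (hβ : 0 < β) (hΔ : 0 < Δ)
    (v : ℕ → Ω → ℝ) (hmeas : ∀ i, Measurable (v i))
    (hindep : iIndepFun v ℙ)
    (hident : ∀ i, Measure.map (v i) ℙ = Measure.map (v 0) ℙ)
    (hbdd : ∀ i ω, v i ω ∈ Set.Icc 0 β)
    (N : Ω → ℕ)
    (hN : ∀ ω, N ω = sInf {k : ℕ | 1 ≤ k ∧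
        (∑ i ∈ Finset.range k, v i ω) / k > (∫ ω', v 0 ω' ∂ℙ) - Δ}) :
    ∫ ω, (N ω : ℝ) ∂ℙ ≤ 1 + β ^ 2 / Δ ^ 2 := by
  set m := ∫ ω', v 0 ω' ∂ℙ
  have hmean : ∀ i, ∫ ω, v i ω ∂ℙ = m := fun i =>
    (IdentDistrib.mk (hmeas i).aemeasurable (hmeas 0).aemeasurable (hident i)).integral_eq
  have hNmeas : Measurable N := by
    rw [funext hN]
    exact measurable_sInf_setOf_nat fun k => (MeasurableSet.const _).inter
      (measurableSet_lt measurable_const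
        ((Finset.measurable_sum _ fun i _ => hmeas i).div_const _))
  set c := 2 * Δ ^ 2 / β ^ 2
  have htail : ∀ k : ℕ, (ℙ : Measure Ω).real {ω | k < N ω} ≤ Real.exp (-c) ^ k := by
    intro k
    calc (ℙ : Measure Ω).real {ω | k < N ω}
        ≤ (ℙ : Measure Ω).real {ω | ∑ i ∈ Finset.range k, v i ω
            ≤ ∑ i ∈ Finset.range k, ∫ ω, v i ω ∂ℙ - k * Δ} := by
          refine measureReal_mono fun ω hω => ?_
          simp only [Set.mem_ofPred_eq, hmean, Finset.sum_const, Finset.card_range,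
            nsmul_eq_mul]
          have hk : k < N ω := hω
          rw [hN] at hk
          linarith [sum_range_le_of_lt_sInf hk]
      _ ≤ Real.exp (-2 * k * Δ ^ 2 / (β - 0) ^ 2) :=
          measureReal_sum_range_le_sub_le_of_iIndepFun hindep (fun i => (hmeas i).aemeasurable)
            (fun i => ae_of_all _ (hbdd i)) k hΔ.le
      _ = Real.exp (-c) ^ k := by
          rw [← Real.exp_nat_mul]; congr 1; ring
  have hc : 0 < c := by positivity
  calc ∫ ω, (N ω : ℝ) ∂ℙ ≤ (1 - Real.exp (-c))⁻¹ :=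
        integral_natCast_le_of_measureReal_lt_le_pow hNmeas (Real.exp_pos _).le
          (Real.exp_lt_one_iff.2 (neg_neg_of_pos hc)) htail
    _ ≤ 1 + c⁻¹ := inv_one_sub_exp_neg_le_one_add_inv hc
    _ ≤ 1 + β ^ 2 / Δ ^ 2 := by
        rw [inv_div]
        gcongr
        linarith [(by positivity : 0 < Δ ^ 2)]
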